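/- Entropy drop from low-error linear predictions: Let Z be a random variable on {0,1}^{n₀}. Let A be a set of pairs (i,j) with i ≠ j, |A| = a, such that the corresponding XOR functionals {z ↦ z_i ⊕ z_j : (i,j) ∈ A} are linearly independent over 𝔽₂ (e.g., A forms a forest on vertex set [n₀]). Suppose there is a fixed vector v ∈ {0,1}^A with E[d_H(u_Z, v)] ≤ a/4, where u_Z = (Z_i ⊕ Z_j)_{(i,j) ∈ A}. Then H(Z) ≤ a·H₂(1/4) + (n₀ - a). -/

import Mathlib

open Finset

variable {Ω : Type*} [Fintype Ω]

/-- Distribution of a random variable `X` with respect to probability weights `p`. -/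
noncomputable def distOf {S : Type*} [DecidableEq S] (p : Ω → ℝ) (X : Ω → S) (s : S) : ℝ :=
  ∑ ω, if X ω = s then p ω else 0

/-- Shannon entropy (in bits) of a distribution on a finite type,
with the convention `0 · log 0 = 0`. -/
noncomputable def H' {S : Type*} [Fintype S] (d : S → ℝ) : ℝ :=
  -∑ s, d s * Real.logb 2 (d s)

/-- Shannon entropy (in bits) of a random variable. -/
noncomputable def entropyOf {S : Type*} [Fintype S] [DecidableEq S]
    (p : Ω → ℝ) (X : Ω → S) : ℝ :=
  H' (distOf p X)

/-- Joint distribution of two random variables. -/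
noncomputable def jointOf {S T : Type*} [DecidableEq S] [DecidableEq T]
    (p : Ω → ℝ) (X : Ω → S) (Y : Ω → T) (s : S) (t : T) : ℝ :=
  ∑ ω, if X ω = s ∧ Y ω = t then p ω else 0

/-- Conditional entropy `H(X | Y) = E_{y ∼ Y}[H(X | Y = y)]`. -/
noncomputable def condEntropyOf {S T : Type*} [Fintype S] [Fintype T]
    [DecidableEq S] [DecidableEq T] (p : Ω → ℝ) (X : Ω → S) (Y : Ω → T) : ℝ :=
  ∑ t, distOf p Y t *
    H' (fun s => if distOf p Y t = 0 then 0 else jointOf p X Y s t / distOf p Y t)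

/-- Mutual information `I(X; Y) = H(X) - H(X | Y)`. -/
noncomputable def mutualInfoOf {S T : Type*} [Fintype S] [Fintype T]
    [DecidableEq S] [DecidableEq T] (p : Ω → ℝ) (X : Ω → S) (Y : Ω → T) : ℝ :=
  entropyOf p X - condEntropyOf p X Y

/-- The binary entropy function `H₂(x) = -x log₂ x - (1-x) log₂ (1-x)`,
with `H₂(0) = H₂(1) = 0`. -/
noncomputable def binEnt (x : ℝ) : ℝ :=
  -(x * Real.logb 2 x) - (1 - x) * Real.logb 2 (1 - x)

/-!
Linear independence of the XOR functionals makes the parity map `𝔽₂^{n₀} → 𝔽₂^A` surjective,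
so each of its fibers has `2^{n₀ - a}` points and `H(Z) ≤ H(u_Z) + (n₀ - a)`. By
subadditivity `H(u_Z) ≤ ∑ₑ H₂(P(u_e ≠ v_e))`; the error probabilities sum to the expected
Hamming distance, at most `a/4`, so concavity of `H₂` and its monotonicity on `[0, 1/2]`
bound the sum by `a · H₂(1/4)`.
-/

section Entropy

variable {S : Type*} [DecidableEq S] {p : Ω → ℝ}

lemma sum_distOf_mul [Fintype S] (X : Ω → S) (g : S → ℝ) :
    ∑ s, distOf p X s * g s = ∑ ω, p ω * g (X ω) := by
  simp only [distOf, sum_mul, ite_mul, zero_mul]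
  rw [sum_comm]
  simp

lemma sum_distOf [Fintype S] (X : Ω → S) : ∑ s, distOf p X s = ∑ ω, p ω := by
  simpa using sum_distOf_mul (p := p) X 1

lemma distOf_nonneg (hp : ∀ ω, 0 ≤ p ω) (X : Ω → S) (s : S) : 0 ≤ distOf p X s :=
  sum_nonneg fun ω _ => by split_ifs <;> simp [hp ω]

lemma le_distOf_apply (hp : ∀ ω, 0 ≤ p ω) (X : Ω → S) (ω : Ω) : p ω ≤ distOf p X (X ω) := by
  have := single_le_sum (f := fun ω' => if X ω' = X ω then p ω' else 0)
    (fun ω' _ => by split_ifs <;> simp [hp ω']) (mem_univ ω)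
  simpa [distOf] using this

lemma distOf_le_one [Fintype S] (hp : ∀ ω, 0 ≤ p ω) (hsum : ∑ ω, p ω = 1) (X : Ω → S)
    (s : S) : distOf p X s ≤ 1 := by
  rw [← hsum, ← sum_distOf X]
  exact single_le_sum (fun s' _ => distOf_nonneg hp X s') (mem_univ s)

lemma distOf_apply_pos (hp : ∀ ω, 0 ≤ p ω) (X : Ω → S) {ω : Ω} (hω : p ω ≠ 0) :
    0 < distOf p X (X ω) :=
  ((hp ω).lt_of_ne' hω).trans_le (le_distOf_apply hp X ω)

lemma entropyOf_eq_sum [Fintype S] (X : Ω → S) :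
    entropyOf p X = -∑ ω, p ω * Real.logb 2 (distOf p X (X ω)) := by
  rw [entropyOf, H', sum_distOf_mul X fun s => Real.logb 2 (distOf p X s)]

lemma entropyOf_le_crossEntropy [Fintype S] (hp : ∀ ω, 0 ≤ p ω) (hsum : ∑ ω, p ω = 1) (X : Ω → S)
    (q : S → ℝ) (hq : ∀ s, 0 ≤ q s) (hq1 : ∑ s, q s ≤ 1)
    (hpos : ∀ ω, p ω ≠ 0 → 0 < q (X ω)) :
    entropyOf p X ≤ -∑ ω, p ω * Real.logb 2 (q (X ω)) := by
  set d := distOf p X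
  have hlog : ∑ ω, p ω * (Real.log (q (X ω)) - Real.log (d (X ω))) ≤ 0 := calc
    _ ≤ ∑ ω, p ω * (q (X ω) / d (X ω) - 1) := by
      refine sum_le_sum fun ω _ => ?_
      rcases eq_or_ne (p ω) 0 with h | h
      · simp [h]
      have hd := distOf_apply_pos hp X h
      rw [← Real.log_div (hpos ω h).ne' hd.ne']
      exact mul_le_mul_of_nonneg_left
        (Real.log_le_sub_one_of_pos (div_pos (hpos ω h) hd)) (hp ω)
    _ = ∑ s, d s * (q s / d s) - 1 := by
      simp only [mul_sub, mul_one, sum_sub_distrib, hsum, d, sum_distOf_mul]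
    _ ≤ ∑ s, q s - 1 := by
      gcongr with s
      rcases eq_or_ne (d s) 0 with h | h
      · simp [h, hq s]
      · rw [mul_div_cancel₀ _ h]
    _ ≤ 0 := by linarith
  have hlog2 : 0 < Real.log 2 := Real.log_pos one_lt_two
  have hdiff : ∑ ω, p ω * Real.logb 2 (q (X ω)) - ∑ ω, p ω * Real.logb 2 (d (X ω))
      = (∑ ω, p ω * (Real.log (q (X ω)) - Real.log (d (X ω)))) / Real.log 2 := by
    rw [← sum_sub_distrib, sum_div]
    refine sum_congr rfl fun ω _ => ?_
    simp only [Real.logb]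
    ring
  rw [entropyOf_eq_sum]
  linarith [div_nonpos_of_nonpos_of_nonneg hlog hlog2.le]

lemma entropyOf_le_entropyOf_comp_add_logb [Fintype S] {T : Type*} [Fintype T] [DecidableEq T]
    (hp : ∀ ω, 0 ≤ p ω) (hsum : ∑ ω, p ω = 1) (X : Ω → S) (f : S → T) (K : ℝ)
    (hK : ∀ t, (#{s | f s = t} : ℝ) ≤ K) :
    entropyOf p X ≤ entropyOf p (f ∘ X) + Real.logb 2 K := by
  set d := distOf p (f ∘ X)
  obtain ⟨ω₀, -, -⟩ := exists_ne_zero_of_sum_ne_zero (hsum.trans_ne one_ne_zero)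
  have hK0 : 0 < K :=
    calc (0 : ℝ) < #{s | f s = f (X ω₀)} := by
          exact_mod_cast card_pos.mpr ⟨X ω₀, by simp⟩
      _ ≤ K := hK _
  have hq1 : ∑ s, d (f s) / K ≤ 1 := by
    rw [← sum_div, div_le_one hK0, ← sum_fiberwise univ f]
    calc ∑ t, ∑ s with f s = t, d (f s) = ∑ t, (#{s | f s = t} : ℝ) * d t := by
          refine sum_congr rfl fun t _ => ?_
          rw [sum_congr rfl fun s hs => by rw [(mem_filter.mp hs).2],
            sum_const, nsmul_eq_mul]
      _ ≤ ∑ t, K * d t := by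
          gcongr with t
          exacts [distOf_nonneg hp _ _, hK t]
      _ = K := by rw [← mul_sum, sum_distOf, hsum, mul_one]
  have hcross := entropyOf_le_crossEntropy hp hsum X (fun s => d (f s) / K)
    (fun s => div_nonneg (distOf_nonneg hp _ _) hK0.le) hq1
    fun ω hω => div_pos (distOf_apply_pos hp (f ∘ X) hω) hK0
  refine hcross.trans_eq ?_
  have hterm : ∀ ω, p ω * Real.logb 2 (d (f (X ω)) / K)
      = p ω * Real.logb 2 (d ((f ∘ X) ω)) - p ω * Real.logb 2 K := by
    intro ω
    rcases eq_or_ne (p ω) 0 with h | h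
    · simp [h]
    have hd : 0 < d (f (X ω)) := distOf_apply_pos hp (f ∘ X) h
    rw [Real.logb_div hd.ne' hK0.ne', mul_sub]
    rfl
  simp only [hterm, sum_sub_distrib, ← sum_mul, hsum, one_mul, entropyOf_eq_sum]
  ring

lemma entropyOf_pi_le [Fintype S] {ι : Type*} [Fintype ι] [DecidableEq ι]
    (hp : ∀ ω, 0 ≤ p ω) (hsum : ∑ ω, p ω = 1) (W : Ω → ι → S) :
    entropyOf p W ≤ ∑ i, entropyOf p (fun ω => W ω i) := by
  set d := fun i => distOf p (fun ω => W ω i)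
  have hq1 : ∑ w : ι → S, ∏ i, d i (w i) = 1 := by
    rw [← Fintype.prod_sum]
    exact prod_eq_one fun i _ => by rw [sum_distOf, hsum]
  have hcross := entropyOf_le_crossEntropy hp hsum W (fun w => ∏ i, d i (w i))
    (fun w => prod_nonneg fun i _ => distOf_nonneg hp _ _) hq1.le
    fun ω hω => prod_pos fun i _ => distOf_apply_pos hp (fun ω => W ω i) hω
  refine hcross.trans_eq ?_
  have hterm : ∀ ω, p ω * Real.logb 2 (∏ i, d i (W ω i))
      = ∑ i, p ω * Real.logb 2 (d i (W ω i)) := by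
    intro ω
    rcases eq_or_ne (p ω) 0 with h | h
    · simp [h]
    rw [Real.logb_prod _ _ fun i _ => (distOf_apply_pos hp (fun ω => W ω i) h).ne',
      mul_sum]
  simp only [hterm, entropyOf_eq_sum, d]
  rw [sum_comm, sum_neg_distrib]

end Entropy

lemma binEnt_eq_binEntropy_div (x : ℝ) : binEnt x = Real.binEntropy x / Real.log 2 := by
  rw [binEnt, Real.binEntropy, Real.log_inv, Real.log_inv, Real.logb, Real.logb]
  ring

lemma entropyOf_bool {p : Ω → ℝ} (hsum : ∑ ω, p ω = 1) (X : Ω → Bool) (b : Bool) :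
    entropyOf p X = binEnt (distOf p X b) := by
  have h1 : distOf p X true + distOf p X false = 1 := by
    rw [← hsum, ← sum_distOf X, Fintype.sum_bool]
  rw [entropyOf, H', Fintype.sum_bool, binEnt]
  cases b
  · rw [show distOf p X true = 1 - distOf p X false by linarith]; ring
  · rw [show distOf p X false = 1 - distOf p X true by linarith]; ring

lemma sum_distOf_not_eq_expected_hammingDist {ι : Type*} [Fintype ι] {p : Ω → ℝ}
    (W : Ω → ι → Bool) (v : ι → Bool) :
    ∑ i, distOf p (fun ω => W ω i) (!v i) = ∑ ω, p ω * (hammingDist (W ω) v : ℝ) := by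
  simp only [distOf, Bool.eq_not_iff]
  rw [sum_comm]
  refine sum_congr rfl fun ω _ => ?_
  rw [sum_ite, sum_const_zero, add_zero, sum_const, nsmul_eq_mul,
    mul_comm, hammingDist]

lemma sum_binEntropy_le {ι : Type*} [Fintype ι] (α : ι → ℝ) (β : ℝ)
    (h0 : ∀ i, 0 ≤ α i) (h1 : ∀ i, α i ≤ 1) (hβ : β ≤ 2⁻¹)
    (hα : ∑ i, α i ≤ Fintype.card ι * β) :
    ∑ i, Real.binEntropy (α i) ≤ Fintype.card ι * Real.binEntropy β := by
  rcases isEmpty_or_nonempty ι with hι | hι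
  · simp
  set n : ℝ := (Fintype.card ι : ℝ)
  have hn : 0 < n := by simp only [n]; exact_mod_cast Fintype.card_pos
  have hmean0 : 0 ≤ n⁻¹ * ∑ i, α i :=
    mul_nonneg (inv_nonneg.mpr hn.le) (sum_nonneg fun i _ => h0 i)
  have hmeanβ : n⁻¹ * ∑ i, α i ≤ β := by rwa [inv_mul_le_iff₀ hn]
  have hjensen := Real.strictConcave_binEntropy.concaveOn.le_map_sum (t := univ)
    (w := fun _ => n⁻¹) (p := α) (fun _ _ => by positivity)
    (by simp [n, card_univ]) fun i _ => ⟨h0 i, h1 i⟩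
  simp only [smul_eq_mul, ← mul_sum] at hjensen
  have hmono : Real.binEntropy (n⁻¹ * ∑ i, α i) ≤ Real.binEntropy β :=
    Real.binEntropy_strictMonoOn.monotoneOn ⟨hmean0, hmeanβ.trans hβ⟩
      ⟨hmean0.trans hmeanβ, hβ⟩ hmeanβ
  rw [← inv_mul_le_iff₀ hn]
  exact hjensen.trans hmono

lemma sum_binEnt_le {ι : Type*} [Fintype ι] (α : ι → ℝ) (β : ℝ)
    (h0 : ∀ i, 0 ≤ α i) (h1 : ∀ i, α i ≤ 1) (hβ : β ≤ 2⁻¹)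
    (hα : ∑ i, α i ≤ Fintype.card ι * β) :
    ∑ i, binEnt (α i) ≤ Fintype.card ι * binEnt β := by
  simp only [binEnt_eq_binEntropy_div, ← sum_div, ← mul_div_assoc]
  exact div_le_div_of_nonneg_right (sum_binEntropy_le α β h0 h1 hβ hα)
    (Real.log_nonneg one_le_two)

theorem LinearMap.surjective_of_linearIndependent_apply {K V ι : Type*} [Field K]
    [AddCommGroup V] [Module K V] [Finite ι] (L : V →ₗ[K] ι → K)
    (h : LinearIndependent K fun i v => L v i) : Function.Surjective L := by
  rw [← LinearMap.range_eq_top, ← Submodule.span_eq (LinearMap.range L), LinearMap.coe_range]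
  exact span_flip_eq_top_iff_linearIndependent.mpr h

theorem AddMonoidHom.card_fiber_mul_card_eq {G M F : Type*} [AddGroup G] [Fintype G]
    [AddMonoid M] [Fintype M] [DecidableEq M] [FunLike F G M] [AddMonoidHomClass F G M]
    (f : F) (hf : Function.Surjective f) (m : M) :
    #{g | f g = m} * Fintype.card M = Fintype.card G := by
  rw [← card_univ (α := G), card_eq_sum_card_fiberwise (f := f) (s := univ)
    (t := univ) fun _ _ => mem_coe.mpr (mem_univ _)]
  rw [sum_congr rfl fun m' _ =>
    AddMonoidHom.card_fiber_eq_of_mem_range f (hf m') (hf m), sum_const, smul_eq_mul,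
    card_univ, mul_comm]

def boolAddEquivZModTwo : Bool ≃+ ZMod 2 where
  toFun b := if b then 1 else 0
  invFun x := decide (x = 1)
  left_inv := by decide
  right_inv := by decide
  map_add' := by decide

section PairSum

variable (R : Type*) [Semiring R] {ι : Type*} (A : Finset (ι × ι))

/-- Over `Bool`, whose ring addition is `xor`, this is the parity vector `u_z`. -/
def pairSum : (ι → R) →ₗ[R] (A → R) where
  toFun z e := z e.1.1 + z e.1.2
  map_add' _ _ := funext fun _ => add_add_add_comm _ _ _ _
  map_smul' c _ := funext fun _ => (mul_add c _ _).symm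

variable {R A}

@[simp]
lemma pairSum_apply (z : ι → R) (e : A) : pairSum R A z e = z e.1.1 + z e.1.2 := rfl

lemma pairSum_comp {R' F : Type*} [Semiring R'] [FunLike F R R'] [AddMonoidHomClass F R R']
    (φ : F) (z : ι → R) :
    pairSum R' A (φ ∘ z) = φ ∘ pairSum R A z := by
  ext e
  simp

lemma pairSum_bool_surjective
    (hli : LinearIndependent (ZMod 2) fun e : A => fun z : ι → ZMod 2 => z e.1.1 + z e.1.2) :
    Function.Surjective (pairSum Bool A) := by
  have hsurj := (pairSum (ZMod 2) A).surjective_of_linearIndependent_apply hli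
  intro w
  obtain ⟨y, hy⟩ := hsurj (boolAddEquivZModTwo ∘ w)
  refine ⟨boolAddEquivZModTwo.symm ∘ y, ?_⟩
  rw [pairSum_comp boolAddEquivZModTwo.symm, hy]
  ext e
  simp

lemma card_fiber_pairSum_bool [Fintype ι] [DecidableEq ι]
    (hli : LinearIndependent (ZMod 2) fun e : A => fun z : ι → ZMod 2 => z e.1.1 + z e.1.2)
    (w : A → Bool) :
    (#{z | pairSum Bool A z = w} : ℝ) = 2 ^ Fintype.card ι / 2 ^ #A := by
  have h := AddMonoidHom.card_fiber_mul_card_eq (pairSum Bool A) (pairSum_bool_surjective hli) w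
  simp only [Fintype.card_fun, Fintype.card_bool, Fintype.card_coe] at h
  rw [eq_div_iff (by positivity)]
  exact_mod_cast h

end PairSum

theorem stmt9_general (n₀ : ℕ) (p : Ω → ℝ) (hp : ∀ ω, 0 ≤ p ω) (hsum : ∑ ω, p ω = 1)
    (Z : Ω → (Fin n₀ → Bool)) (A : Finset (Fin n₀ × Fin n₀)) (a : ℕ)
    (hAcard : A.card = a)
    (hli : LinearIndependent (ZMod 2)
      (fun e : A => fun z : Fin n₀ → ZMod 2 => z e.1.1 + z e.1.2))
    (v : A → Bool)
    (hdist : ∑ ω, p ω *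
        (hammingDist (fun e : A => xor (Z ω e.1.1) (Z ω e.1.2)) v : ℝ) ≤ (a : ℝ) / 4) :
    entropyOf p Z ≤ (a : ℝ) * binEnt (1 / 4) + ((n₀ : ℝ) - (a : ℝ)) := by
  have hcardA : Fintype.card A = a := by rw [Fintype.card_coe, hAcard]
  have hlogb : Real.logb 2 (2 ^ n₀ / 2 ^ a) = n₀ - a := by
    rw [Real.logb_div (by positivity) (by positivity), Real.logb_pow, Real.logb_pow,
      Real.logb_self_eq_one one_lt_two, mul_one, mul_one]
  set α : A → ℝ := fun e => distOf p (fun ω => pairSum Bool A (Z ω) e) (!v e)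
  have hα : ∑ e, α e ≤ Fintype.card A * 4⁻¹ := by
    rw [sum_distOf_not_eq_expected_hammingDist, hcardA, ← div_eq_mul_inv]
    exact hdist
  calc entropyOf p Z
      ≤ entropyOf p (pairSum Bool A ∘ Z) + Real.logb 2 (2 ^ n₀ / 2 ^ a) :=
        entropyOf_le_entropyOf_comp_add_logb hp hsum Z _ _ fun w => by
          rw [card_fiber_pairSum_bool hli, Fintype.card_fin, hAcard]
    _ ≤ ∑ e, entropyOf p (fun ω => pairSum Bool A (Z ω) e) + (n₀ - a) := by
        rw [hlogb]
        gcongr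
        exact entropyOf_pi_le hp hsum _
    _ = ∑ e, binEnt (α e) + (n₀ - a) := by
        rw [sum_congr rfl fun e _ => entropyOf_bool hsum _ (!v e)]
    _ ≤ a * binEnt (1 / 4) + (n₀ - a) := by
        gcongr
        rw [← hcardA, one_div]
        exact sum_binEnt_le α 4⁻¹ (fun e => distOf_nonneg hp _ _)
          (fun e => distOf_le_one hp hsum _ _) (by norm_num) hα

/-- Entropy drop from low-error linear predictions: if the XOR functionals indexed by
a set `A` of `a` pairs are linearly independent over `𝔽₂` and some fixed vector `v`
predicts the induced parities `u_Z` with expected Hamming error at most `a/4`,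
then `H(Z) ≤ a·H₂(1/4) + (n₀ - a)`. -/
theorem stmt9 (n₀ : ℕ) (p : Ω → ℝ) (hp : ∀ ω, 0 ≤ p ω) (hsum : ∑ ω, p ω = 1)
    (Z : Ω → (Fin n₀ → Bool)) (A : Finset (Fin n₀ × Fin n₀)) (a : ℕ)
    (hAcard : A.card = a) (hne : ∀ e ∈ A, e.1 ≠ e.2)
    (hli : LinearIndependent (ZMod 2)
      (fun e : A => fun z : Fin n₀ → ZMod 2 => z e.1.1 + z e.1.2))
    (v : A → Bool)
    (hdist : ∑ ω, p ω *
        (hammingDist (fun e : A => xor (Z ω e.1.1) (Z ω e.1.2)) v : ℝ) ≤ (a : ℝ) / 4) :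
    entropyOf p Z ≤ (a : ℝ) * binEnt (1 / 4) + ((n₀ : ℝ) - (a : ℝ)) :=
  stmt9_general n₀ p hp hsum Z A a hAcard hli v hdist
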